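/- The function PTSiLU is continuously differentiable on ℝ; its derivative is −(ln 2)·2^x for x < x̄_c and 1 − (ln 2)·2^{−x−1} for x > x̄_c, and both one-sided limits at x̄_c equal (1 − √(1+2(ln 2)²))/2. -/

import Mathlib

noncomputable section
open Real Filter

def sq2 : ℝ := Real.sqrt (1 + 2 * (Real.log 2) ^ 2)
def xbc : ℝ := Real.logb 2 ((sq2 - 1) / (2 * Real.log 2))
def Cb : ℝ := -sq2 / Real.log 2 - xbc
def PTSiLU (x : ℝ) : ℝ := if x < xbc then -(2:ℝ) ^ x else (2:ℝ) ^ (-x - 1) + x + Cb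
def SiLU (x : ℝ) : ℝ := x * Real.exp x / (1 + Real.exp x)

/-!
PTSiLU glues the two smooth branches `-2^x` and `2^(-x-1) + x + Cb` at `xbc`. Writing
`s = sq2` and `L = log 2`, so that `s² = 1 + 2L²`, one has `2^xbc = (s - 1)/(2L)` and
`2^(-xbc-1) = (s + 1)/(2L)`; with these both the values and the slopes `(1 - s)/2` of the branches
agree at `xbc`, and branches that match to first order glue to a function whose derivative is
glued from theirs.
-/

section Gluing

variable {F : Type*} [NormedAddCommGroup F] [NormedSpace ℝ F] {f g f' g' : ℝ → F} {a : ℝ}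

theorem hasDerivAt_ite_lt (hf : ∀ x, HasDerivAt f (f' x) x) (hg : ∀ x, HasDerivAt g (g' x) x)
    (hfg : f a = g a) (hfg' : f' a = g' a) (x : ℝ) :
    HasDerivAt (fun y => if y < a then f y else g y) (if x ≤ a then f' x else g' x) x := by
  rcases lt_trichotomy x a with hx | rfl | hx
  · rw [if_pos hx.le]
    refine (hf x).congr_of_eventuallyEq ?_
    filter_upwards [Iio_mem_nhds hx] with y hy
    exact if_pos hy
  · rw [if_pos le_rfl]
    have hleft : HasDerivWithinAt (fun y => if y < x then f y else g y) (f' x) (Set.Iic x) x := by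
      refine (hf x).hasDerivWithinAt.congr (fun y hy => ?_) (by simp [hfg])
      rcases (Set.mem_Iic.mp hy).lt_or_eq with hlt | rfl
      · exact if_pos hlt
      · simp [hfg]
    have hright : HasDerivWithinAt (fun y => if y < x then f y else g y) (f' x) (Set.Ici x) x := by
      rw [hfg']
      exact (hg x).hasDerivWithinAt.congr (fun y hy => if_neg (not_lt.mpr hy)) (by simp)
    simpa only [Set.Iic_union_Ici, hasDerivWithinAt_univ] using hleft.union hright
  · rw [if_neg hx.not_ge]
    refine (hg x).congr_of_eventuallyEq ?_
    filter_upwards [Ioi_mem_nhds hx] with y hy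
    exact if_neg hy.not_gt

end Gluing

theorem log_two_pos : 0 < Real.log 2 :=
  Real.log_pos one_lt_two

theorem sq2_sq : sq2 ^ 2 = 1 + 2 * Real.log 2 ^ 2 :=
  Real.sq_sqrt (by positivity)

theorem one_lt_sq2 : 1 < sq2 := by
  rw [sq2, Real.lt_sqrt zero_le_one]
  nlinarith [log_two_pos]

theorem two_rpow_xbc : (2:ℝ) ^ xbc = (sq2 - 1) / (2 * Real.log 2) :=
  Real.rpow_logb two_pos (by norm_num)
    (div_pos (sub_pos.mpr one_lt_sq2) (by positivity [log_two_pos]))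

theorem two_rpow_neg_xbc_sub_one : (2:ℝ) ^ (-xbc - 1) = (sq2 + 1) / (2 * Real.log 2) := by
  have hL := log_two_pos.ne'
  have hs : sq2 - 1 ≠ 0 := (sub_pos.mpr one_lt_sq2).ne'
  rw [Real.rpow_sub two_pos, Real.rpow_neg zero_le_two, two_rpow_xbc, Real.rpow_one]
  field_simp
  linear_combination -sq2_sq

theorem hasDerivAt_neg_two_rpow (x : ℝ) :
    HasDerivAt (fun y : ℝ => -(2:ℝ) ^ y) (-(Real.log 2 * (2:ℝ) ^ x)) x := by
  have h := ((hasDerivAt_id' x).const_rpow two_pos).neg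
  rw [mul_one] at h
  exact h

theorem hasDerivAt_two_rpow_neg_sub_one_add (x : ℝ) :
    HasDerivAt (fun y : ℝ => (2:ℝ) ^ (-y - 1) + y + Cb)
      (1 - Real.log 2 * (2:ℝ) ^ (-x - 1)) x := by
  have hexponent : HasDerivAt (fun y : ℝ => -y - 1) (-1) x := (hasDerivAt_neg x).sub_const 1
  exact (((hexponent.const_rpow two_pos).add (hasDerivAt_id' x)).add_const Cb).congr_deriv
    (by ring)

theorem ptsilu_branches_eq_at_xbc : -(2:ℝ) ^ xbc = (2:ℝ) ^ (-xbc - 1) + xbc + Cb := by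
  have hL := log_two_pos.ne'
  rw [two_rpow_xbc, two_rpow_neg_xbc_sub_one, Cb]
  field_simp
  ring

theorem ptsilu_slope_at_xbc : -(Real.log 2 * (2:ℝ) ^ xbc) = (1 - sq2) / 2 := by
  have hL := log_two_pos.ne'
  rw [two_rpow_xbc]
  field_simp
  ring

theorem ptsilu_slopes_eq_at_xbc :
    -(Real.log 2 * (2:ℝ) ^ xbc) = 1 - Real.log 2 * (2:ℝ) ^ (-xbc - 1) := by
  have hL := log_two_pos.ne'
  rw [ptsilu_slope_at_xbc, two_rpow_neg_xbc_sub_one]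
  field_simp
  ring

theorem hasDerivAt_ptsilu (x : ℝ) :
    HasDerivAt PTSiLU
      (if x ≤ xbc then -(Real.log 2 * (2:ℝ) ^ x) else 1 - Real.log 2 * (2:ℝ) ^ (-x - 1)) x :=
  hasDerivAt_ite_lt hasDerivAt_neg_two_rpow hasDerivAt_two_rpow_neg_sub_one_add
    ptsilu_branches_eq_at_xbc ptsilu_slopes_eq_at_xbc x

theorem deriv_ptsilu :
    deriv PTSiLU = fun x =>
      if x ≤ xbc then -(Real.log 2 * (2:ℝ) ^ x) else 1 - Real.log 2 * (2:ℝ) ^ (-x - 1) :=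
  funext fun x => (hasDerivAt_ptsilu x).deriv

theorem continuous_deriv_ptsilu : Continuous (deriv PTSiLU) := by
  rw [deriv_ptsilu]
  exact Continuous.if_le (by fun_prop (disch := norm_num)) (by fun_prop (disch := norm_num))
    continuous_id continuous_const fun x hx => hx ▸ ptsilu_slopes_eq_at_xbc

theorem ptsilu_contDiff :
    Differentiable ℝ PTSiLU ∧ Continuous (deriv PTSiLU) ∧
    (∀ x : ℝ, x < xbc → deriv PTSiLU x = -(Real.log 2 * (2:ℝ) ^ x)) ∧
    (∀ x : ℝ, xbc < x → deriv PTSiLU x = 1 - Real.log 2 * (2:ℝ) ^ (-x - 1)) ∧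
    Tendsto (deriv PTSiLU) (nhdsWithin xbc (Set.Iio xbc)) (nhds ((1 - sq2) / 2)) ∧
    Tendsto (deriv PTSiLU) (nhdsWithin xbc (Set.Ioi xbc)) (nhds ((1 - sq2) / 2)) := by
  have hlim : Tendsto (deriv PTSiLU) (nhds xbc) (nhds ((1 - sq2) / 2)) := by
    simpa only [deriv_ptsilu, le_refl, if_true, ptsilu_slope_at_xbc] using
      continuous_deriv_ptsilu.tendsto xbc
  refine ⟨fun x => (hasDerivAt_ptsilu x).differentiableAt, continuous_deriv_ptsilu,
    fun x hx => by simp only [deriv_ptsilu, if_pos hx.le],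
    fun x hx => by simp only [deriv_ptsilu, if_neg hx.not_ge],
    hlim.mono_left nhdsWithin_le_nhds, hlim.mono_left nhdsWithin_le_nhds⟩
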